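/- arXiv:2402.04604 — 2 statements merged into one kernel-verified Lean document; each statement's English description precedes it below -/
import Mathlib

section
/- If σ ∈ G has odd order, then for every nonzero b ∈ L the symmetric bilinear form φ_{b,σ} is nondegenerate. -/
/-!
If `x` lies in the radical of `φ_{b,σ}`, moving `σ` across the trace and using nondegeneracy of
the trace form gives `σ⁻¹(b x) = -b σ(x)`. The orbit product `P(z) = ∏_{k < ord σ} σᵏ(z)` is
multiplicative and `σ`-invariant, and odd because `ord σ` is odd; applied to this relation it
yields `P(b) P(x) = -P(b) P(x)`, so `P(b) P(x) = 0` in characteristic `≠ 2`, forcing `x = 0`.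
-/

open Finset

namespace AlgEquiv

variable {K L : Type*} [CommSemiring K] [CommRing L] [Algebra K L] (σ : L ≃ₐ[K] L)

noncomputable def orbitProd (z : L) : L :=
  ∏ k ∈ range (orderOf σ), (σ ^ k) z

theorem orbitProd_mul (a c : L) : σ.orbitProd (a * c) = σ.orbitProd a * σ.orbitProd c := by
  simp only [orbitProd, map_mul, prod_mul_distrib]

theorem orbitProd_apply (z : L) : σ.orbitProd (σ z) = σ.orbitProd z := by
  unfold orbitProd
  have hshift : ∀ k, (σ ^ k) (σ z) = (σ ^ (k + 1)) z := fun k => by rw [pow_succ]; rfl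
  have hcycle : (σ ^ orderOf σ) z = (σ ^ 0) z := by rw [pow_orderOf_eq_one, pow_zero]
  simp_rw [hshift]
  cases hn : orderOf σ with
  | zero => rfl
  | succ m => rw [prod_range_succ, ← hn, hcycle, hn, prod_range_succ' (fun k => (σ ^ k) z)]

theorem orbitProd_neg (hodd : Odd (orderOf σ)) (z : L) : σ.orbitProd (-z) = -σ.orbitProd z := by
  simp only [orbitProd, map_neg, prod_neg, card_range, hodd.neg_one_pow, neg_one_mul]

theorem orbitProd_ne_zero [IsDomain L] {z : L} (hz : z ≠ 0) : σ.orbitProd z ≠ 0 :=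
  prod_ne_zero_iff.mpr fun k _ => (map_ne_zero_iff _ (σ ^ k).injective).mpr hz

theorem eq_zero_of_symm_apply_mul_eq_neg [IsDomain L] (hodd : Odd (orderOf σ))
    (h2 : (2 : L) ≠ 0) {b x : L} (hb : b ≠ 0) (hbx : σ.symm (b * x) = -(b * σ x)) : x = 0 := by
  by_contra hx
  have hP : σ.orbitProd b * σ.orbitProd x = -(σ.orbitProd b * σ.orbitProd x) := by
    calc σ.orbitProd b * σ.orbitProd x
        = σ.orbitProd (σ (σ.symm (b * x))) := by rw [apply_symm_apply, orbitProd_mul]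
      _ = σ.orbitProd (-(b * σ x)) := by rw [orbitProd_apply, hbx]
      _ = -(σ.orbitProd b * σ.orbitProd x) := by
          rw [orbitProd_neg σ hodd, orbitProd_mul, orbitProd_apply]
  have h0 : 2 * (σ.orbitProd b * σ.orbitProd x) = 0 := by linear_combination hP
  exact mul_ne_zero h2 (mul_ne_zero (σ.orbitProd_ne_zero hb) (σ.orbitProd_ne_zero hx)) h0

end AlgEquiv

theorem Algebra.trace_mul_algEquiv_apply {K L : Type*} [CommRing K] [CommRing L] [Algebra K L]
    (σ : L ≃ₐ[K] L) (a y : L) : trace K L (a * σ y) = trace K L (σ.symm a * y) := by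
  rw [← trace_eq_of_algEquiv σ (σ.symm a * y), map_mul σ, AlgEquiv.apply_symm_apply]

theorem AlgEquiv.symm_apply_mul_eq_neg_of_trace_eq_zero {K L : Type*} [Field K] [Field L]
    [Algebra K L] [FiniteDimensional K L] [Algebra.IsSeparable K L] (σ : L ≃ₐ[K] L) {b x : L}
    (hx : ∀ y, Algebra.trace K L (b * (x * σ y + σ x * y)) = 0) :
    σ.symm (b * x) = -(b * σ x) := by
  refine eq_neg_of_add_eq_zero_left <| (traceForm_nondegenerate K L).1 _ fun y => ?_
  rw [Algebra.traceForm_apply, add_mul, map_add, ← Algebra.trace_mul_algEquiv_apply, ← hx y,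
    mul_add, map_add, mul_assoc, mul_assoc]

/-- If `σ ∈ Gal(L/K)` has odd order, then for every nonzero `b ∈ L` the
symmetric bilinear form `φ_{b,σ}(x,y) = Tr_{L/K}(b·(x·σ(y) + σ(x)·y))` is nondegenerate,
i.e. its radical is `{0}`. -/
theorem nondegenerate_of_odd_order (K L : Type*) [Field K] [Field L] [Algebra K L]
    [FiniteDimensional K L] [IsGalois K L] (h2 : (2 : K) ≠ 0)
    (σ : L ≃ₐ[K] L) (hodd : Odd (orderOf σ)) (b : L) (hb : b ≠ 0) :
    ∀ x : L, (∀ y : L, Algebra.trace K L (b * (x * σ y + σ x * y)) = 0) → x = 0 := by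
  intro x hx
  have h2L : (2 : L) ≠ 0 := by
    simpa only [map_ofNat] using (map_ne_zero (algebraMap K L)).mpr h2
  exact σ.eq_zero_of_symm_apply_mul_eq_neg hodd h2L hb
    (σ.symm_apply_mul_eq_neg_of_trace_eq_zero hx)
end

section
/- Let n = 2^α·k with α ≥ 2 and k odd, and let L/K be a cyclic Galois extension of degree n with Gal(L/K) = ⟨σ⟩. Then the K-subspaces V₁ := {b ∈ L : σ^k(b) = b} and V₂ := {b ∈ L : σ^k(b) = −b} of L both have K-dimension k. -/
/-!
The fixed field `F` of `τ = σ^k` is `V₁`, and `τ` generates `Gal(L/F)`, of order `2^α`; hence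
`[F : K] = n / 2^α = k`. Since `τ` has even order, `-1` is a root of its minimal polynomial
`X^(2^α) - 1`, so some `w ≠ 0` satisfies `τ w = -w`, and multiplication by `w` maps `V₁`
isomorphically onto `V₂`.
-/

open Module IntermediateField

namespace AlgEquiv

variable {K L : Type*} [Field K] [Field L] [Algebra K L]

lemma mem_fixedField_zpowers_iff (τ : L ≃ₐ[K] L) (x : L) :
    x ∈ fixedField (Subgroup.zpowers τ) ↔ τ x = x := by
  rw [mem_fixedField_iff]
  exact Subgroup.zpowers_le (H := MulAction.stabilizer (L ≃ₐ[K] L) x)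

lemma ker_toLinearMap_sub_id (τ : L ≃ₐ[K] L) :
    LinearMap.ker (τ.toLinearMap - LinearMap.id) =
      Subalgebra.toSubmodule (fixedField (Subgroup.zpowers τ)).toSubalgebra := by
  ext x
  simp only [LinearMap.mem_ker, LinearMap.sub_apply, toLinearMap_apply, LinearMap.id_apply,
    sub_eq_zero, Subalgebra.mem_toSubmodule, mem_toSubalgebra, mem_fixedField_zpowers_iff]

lemma finrank_ker_toLinearMap_sub_id_mul_orderOf [FiniteDimensional K L] (τ : L ≃ₐ[K] L) :
    finrank K (LinearMap.ker (τ.toLinearMap - LinearMap.id)) * orderOf τ = finrank K L := by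
  rw [ker_toLinearMap_sub_id, ← Nat.card_zpowers, ← finrank_fixedField_eq_card]
  exact finrank_mul_finrank K (fixedField (Subgroup.zpowers τ)) L

lemma exists_ne_zero_apply_eq_neg [FiniteDimensional K L] (τ : L ≃ₐ[K] L)
    (hτ : Even (orderOf τ)) : ∃ w ≠ 0, τ w = -w := by
  have hroot : (minpoly K τ.toLinearMap).IsRoot (-1) := by
    simp [minpoly_algEquiv_toLinearMap τ (isOfFinOrder_of_finite τ), hτ.neg_one_pow]
  obtain ⟨w, hw⟩ := (Module.End.hasEigenvalue_of_isRoot hroot).exists_hasEigenvector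
  exact ⟨w, hw.2, by simpa using Module.End.mem_eigenspace_iff.1 hw.1⟩

lemma finrank_ker_toLinearMap_add_id_eq {τ : L ≃ₐ[K] L} {w : L} (hw0 : w ≠ 0) (hw : τ w = -w) :
    finrank K (LinearMap.ker (τ.toLinearMap + LinearMap.id)) =
      finrank K (LinearMap.ker (τ.toLinearMap - LinearMap.id)) := by
  let μ : L →ₗ[K] L := LinearMap.mulLeft K w
  have hμ : Function.Injective μ := mul_right_injective₀ hw0
  have hmap : (LinearMap.ker (τ.toLinearMap - LinearMap.id)).map μ =
      LinearMap.ker (τ.toLinearMap + LinearMap.id) := by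
    ext x
    simp only [Submodule.mem_map, LinearMap.mem_ker, LinearMap.sub_apply, LinearMap.add_apply,
      toLinearMap_apply, LinearMap.id_apply, sub_eq_zero, μ, LinearMap.mulLeft_apply]
    constructor
    · rintro ⟨b, hb, rfl⟩
      rw [map_mul, hw, hb]
      ring
    · intro hx
      refine ⟨w⁻¹ * x, ?_, by field_simp⟩
      rw [map_mul, map_inv₀, hw, eq_neg_of_add_eq_zero_left hx]
      field_simp
  rw [← hmap]
  exact (Submodule.equivMapOfInjective μ hμ _).finrank_eq.symm

end AlgEquiv

lemma IsGalois.orderOf_eq_finrank_of_forall_mem_zpowers {K L : Type*} [Field K] [Field L]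
    [Algebra K L] [FiniteDimensional K L] [IsGalois K L] {σ : L ≃ₐ[K] L}
    (hσ : ∀ τ : L ≃ₐ[K] L, τ ∈ Subgroup.zpowers σ) : orderOf σ = finrank K L := by
  rw [orderOf_eq_card_of_forall_mem_zpowers hσ, IsGalois.card_aut_eq_finrank]

theorem dim_eigenspaces_sigma_pow_k_general (K L : Type*) [Field K] [Field L] [Algebra K L]
    [FiniteDimensional K L] [IsGalois K L]
    (n α k : ℕ) (hα : 2 ≤ α) (hk : Odd k) (hnk : n = 2 ^ α * k)
    (hn : finrank K L = n)
    (σ : L ≃ₐ[K] L) (hgen : ∀ τ : L ≃ₐ[K] L, τ ∈ Subgroup.zpowers σ) :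
    finrank K (LinearMap.ker ((σ ^ k).toLinearMap - LinearMap.id)) = k ∧
    finrank K (LinearMap.ker ((σ ^ k).toLinearMap + LinearMap.id)) = k := by
  have hord : orderOf (σ ^ k) = 2 ^ α := by
    rw [orderOf_pow, IsGalois.orderOf_eq_finrank_of_forall_mem_zpowers hgen, hn, hnk,
      Nat.gcd_mul_left_left, Nat.mul_div_cancel _ hk.pos]
  have hfix : finrank K (LinearMap.ker ((σ ^ k).toLinearMap - LinearMap.id)) = k := by
    refine Nat.eq_of_mul_eq_mul_right (Nat.two_pow_pos α) ?_
    rw [← hord, AlgEquiv.finrank_ker_toLinearMap_sub_id_mul_orderOf, hord, hn, hnk, mul_comm]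
  obtain ⟨w, hw0, hw⟩ := (σ ^ k).exists_ne_zero_apply_eq_neg
    (by rw [hord]; exact Nat.even_pow.2 ⟨even_two, by omega⟩)
  exact ⟨hfix, (AlgEquiv.finrank_ker_toLinearMap_add_id_eq hw0 hw).trans hfix⟩

/-- Let `n = 2^α·k` with `α ≥ 2` and `k` odd, and let `L/K` be a cyclic
Galois extension of degree `n` with `Gal(L/K) = ⟨σ⟩`.  Then the `K`-subspaces
`V₁ = {b ∈ L : σ^k(b) = b}` (the kernel of `σ^k − id`) and `V₂ = {b ∈ L : σ^k(b) = −b}`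
(the kernel of `σ^k + id`) of `L` both have `K`-dimension `k`. -/
theorem dim_eigenspaces_sigma_pow_k (K L : Type*) [Field K] [Field L] [Algebra K L]
    [FiniteDimensional K L] [IsGalois K L] (h2 : (2 : K) ≠ 0)
    (n α k : ℕ) (hα : 2 ≤ α) (hk : Odd k) (hnk : n = 2 ^ α * k)
    (hn : finrank K L = n)
    (σ : L ≃ₐ[K] L) (hgen : ∀ τ : L ≃ₐ[K] L, τ ∈ Subgroup.zpowers σ) :
    finrank K (LinearMap.ker ((σ ^ k).toLinearMap - LinearMap.id)) = k ∧
    finrank K (LinearMap.ker ((σ ^ k).toLinearMap + LinearMap.id)) = k :=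
  dim_eigenspaces_sigma_pow_k_general K L n α k hα hk hnk hn σ hgen
end
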